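/- Let A be an m×n real matrix with rank n, let x ∈ ℝⁿ with Ax > b componentwise, and define the projection matrix P = A_x (A_xᵀ A_x)⁻¹ A_xᵀ where A_x = S_x⁻¹ A and S_x = diag(Ax − b). Then for any v ∈ ℝⁿ, the Ricci curvature of the Hessian manifold induced by the logarithmic barrier φ(x) = −∑ᵢ log(aᵢᵀx − bᵢ) satisfies Ric(v) = s_vᵀ P^{(2)} s_v − σᵀ P s_v², where s_v = A_x v, σ = diag(P) (the vector of diagonal entries), (P^{(2)})_{ij} = P_{ij}², and s_v² denotes entrywise square. -/

import Mathlib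

/-- Slack vector `s_x = Ax − b`. -/
noncomputable def slack {m n : ℕ} (A : Matrix (Fin m) (Fin n) ℝ) (b : Fin m → ℝ)
    (x : Fin n → ℝ) : Fin m → ℝ :=
  fun i => A.mulVec x i - b i

/-- Rescaled matrix `A_x = S_x⁻¹ A`. -/
noncomputable def Ascaled {m n : ℕ} (A : Matrix (Fin m) (Fin n) ℝ) (b : Fin m → ℝ)
    (x : Fin n → ℝ) : Matrix (Fin m) (Fin n) ℝ :=
  Matrix.of fun i j => A i j / slack A b x i

/-- The log-barrier Hessian metric `g(x) = A_xᵀ A_x`. -/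
noncomputable def gmat {m n : ℕ} (A : Matrix (Fin m) (Fin n) ℝ) (b : Fin m → ℝ)
    (x : Fin n → ℝ) : Matrix (Fin n) (Fin n) ℝ :=
  (Ascaled A b x).transpose * Ascaled A b x

/-- Projection matrix `P = A_x (A_xᵀ A_x)⁻¹ A_xᵀ`. -/
noncomputable def Pmat {m n : ℕ} (A : Matrix (Fin m) (Fin n) ℝ) (b : Fin m → ℝ)
    (x : Fin n → ℝ) : Matrix (Fin m) (Fin m) ℝ :=
  Ascaled A b x * (gmat A b x)⁻¹ * (Ascaled A b x).transpose

/-- Third derivative tensor of the log barrier: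
`φ_{ijk} = −2 ∑_ℓ (A_x)_{ℓi}(A_x)_{ℓj}(A_x)_{ℓk}`. -/
noncomputable def phi3 {m n : ℕ} (A : Matrix (Fin m) (Fin n) ℝ) (b : Fin m → ℝ)
    (x : Fin n → ℝ) (i j k : Fin n) : ℝ :=
  -2 * ∑ l, Ascaled A b x l i * Ascaled A b x l j * Ascaled A b x l k

/-- Riemann curvature tensor components
`R_{klij} = (1/4)∑_{pq} g^{pq}(φ_{jkp}φ_{ilq} − φ_{ikp}φ_{jlq})`. -/
noncomputable def Rtensor {m n : ℕ} (A : Matrix (Fin m) (Fin n) ℝ) (b : Fin m → ℝ)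
    (x : Fin n → ℝ) (k l i j : Fin n) : ℝ :=
  (1/4) * ∑ p, ∑ q, (gmat A b x)⁻¹ p q *
    (phi3 A b x j k p * phi3 A b x i l q - phi3 A b x i k p * phi3 A b x j l q)

/-- Ricci curvature `Ric(v) = ∑_{jl} g^{jl} ⟨R(v,e_j)e_l, v⟩`. -/
noncomputable def RicLog {m n : ℕ} (A : Matrix (Fin m) (Fin n) ℝ) (b : Fin m → ℝ)
    (x : Fin n → ℝ) (v : Fin n → ℝ) : ℝ :=
  ∑ j, ∑ l, (gmat A b x)⁻¹ j l * ∑ k, ∑ i, Rtensor A b x k l i j * v i * v k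

open Matrix in
private lemma gmat_symmT {m n : ℕ} (A : Matrix (Fin m) (Fin n) ℝ) (b : Fin m → ℝ) (x : Fin n → ℝ) :
    (gmat A b x)ᵀ = gmat A b x := by
  simp [gmat, Matrix.transpose_mul]

section helpers
variable {m n : ℕ} (A : Matrix (Fin m) (Fin n) ℝ) (b : Fin m → ℝ) (x : Fin n → ℝ)

private lemma sum_rotate {α β γ : Type*} [Fintype α] [Fintype β] [Fintype γ] (g : α → β → γ → ℝ) :
    ∑ i, ∑ a, ∑ c, g i a c = ∑ a, ∑ c, ∑ i, g i a c := by
  rw [Finset.sum_comm]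
  exact Finset.sum_congr rfl fun a _ => Finset.sum_comm

lemma pmat_eq (a c : Fin m) :
    Pmat A b x a c = ∑ p, ∑ q, (gmat A b x)⁻¹ p q * Ascaled A b x a p * Ascaled A b x c q := by
  simp only [Pmat, Matrix.mul_apply, Matrix.transpose_apply, Finset.sum_mul]
  rw [Finset.sum_comm]
  exact Finset.sum_congr rfl fun p _ => Finset.sum_congr rfl fun q _ => by ring

lemma ginv_symm (p q : Fin n) : (gmat A b x)⁻¹ p q = (gmat A b x)⁻¹ q p := by
  have h := gmat_symmT A b x
  calc (gmat A b x)⁻¹ p q = ((gmat A b x)⁻¹).transpose q p := rfl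
    _ = ((gmat A b x).transpose)⁻¹ q p := by rw [Matrix.transpose_nonsing_inv]
    _ = (gmat A b x)⁻¹ q p := by rw [h]

lemma pmat_symm (a c : Fin m) : Pmat A b x a c = Pmat A b x c a := by
  rw [pmat_eq, pmat_eq, Finset.sum_comm]
  refine Finset.sum_congr rfl fun p _ => Finset.sum_congr rfl fun q _ => ?_
  rw [ginv_symm]
  ring

private lemma sum4_mul {α β γ δ : Type*} [Fintype α] [Fintype β] [Fintype γ] [Fintype δ]
    (C : ℝ) (f : α → β → ℝ) (g : γ → ℝ) (h : δ → ℝ) :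
    C * (∑ j, ∑ l, f j l) * (∑ k, g k) * (∑ i, h i)
      = ∑ j, ∑ l, ∑ k, ∑ i, C * f j l * g k * h i := by
  rw [Finset.mul_sum Finset.univ (fun j => ∑ l, f j l) C,
      Finset.sum_mul Finset.univ (fun j => C * ∑ l, f j l) (∑ k, g k),
      Finset.sum_mul Finset.univ (fun j => (C * ∑ l, f j l) * ∑ k, g k) (∑ i, h i)]
  refine Finset.sum_congr rfl fun j _ => ?_
  rw [Finset.mul_sum Finset.univ (fun l => f j l) C,
      Finset.sum_mul Finset.univ (fun l => C * f j l) (∑ k, g k),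
      Finset.sum_mul Finset.univ (fun l => (C * f j l) * ∑ k, g k) (∑ i, h i)]
  refine Finset.sum_congr rfl fun l _ => ?_
  rw [Finset.mul_sum Finset.univ (fun k => g k) (C * f j l),
      Finset.sum_mul Finset.univ (fun k => C * f j l * g k) (∑ i, h i)]
  refine Finset.sum_congr rfl fun k _ => ?_
  rw [Finset.mul_sum Finset.univ (fun i => h i) (C * f j l * g k)]

private lemma prod_expand {α : Type*} [Fintype α] (g4 : ℝ) (f1 f2 f3 f4 : α → ℝ) :
    g4 * ((-2 * ∑ a, f1 a) * (-2 * ∑ a, f2 a) - (-2 * ∑ a, f3 a) * (-2 * ∑ a, f4 a))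
    = ∑ a, ∑ c, (4 * g4 * (f1 a * f2 c) - 4 * g4 * (f3 a * f4 c)) := by
  have h1 : (∑ a, f1 a) * (∑ c, f2 c) = ∑ a, ∑ c, f1 a * f2 c :=
    Finset.sum_mul_sum _ _ _ _
  have h2 : (∑ a, f3 a) * (∑ c, f4 c) = ∑ a, ∑ c, f3 a * f4 c :=
    Finset.sum_mul_sum _ _ _ _
  calc g4 * ((-2 * ∑ a, f1 a) * (-2 * ∑ a, f2 a) - (-2 * ∑ a, f3 a) * (-2 * ∑ a, f4 a))
      = 4 * g4 * ((∑ a, f1 a) * (∑ c, f2 c)) - 4 * g4 * ((∑ a, f3 a) * (∑ c, f4 c)) := by ring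
    _ = 4 * g4 * (∑ a, ∑ c, f1 a * f2 c) - 4 * g4 * (∑ a, ∑ c, f3 a * f4 c) := by rw [h1, h2]
    _ = (∑ a, ∑ c, 4 * g4 * (f1 a * f2 c)) - ∑ a, ∑ c, 4 * g4 * (f3 a * f4 c) := by
        simp only [Finset.mul_sum]
    _ = ∑ a, ∑ c, (4 * g4 * (f1 a * f2 c) - 4 * g4 * (f3 a * f4 c)) := by
        rw [← Finset.sum_sub_distrib]
        exact Finset.sum_congr rfl fun a _ => (Finset.sum_sub_distrib _ _).symm

end helpers

section main
variable {m n : ℕ} (A : Matrix (Fin m) (Fin n) ℝ) (b : Fin m → ℝ) (x : Fin n → ℝ)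

private lemma swap4 {α β : Type*} [Fintype α] [Fintype β]
    (f : α → α → β → β → ℝ) :
    ∑ p, ∑ q, ∑ a, ∑ c, f p q a c = ∑ a, ∑ c, ∑ p, ∑ q, f p q a c := by
  calc ∑ p, ∑ q, ∑ a, ∑ c, f p q a c
      = ∑ p, ∑ a, ∑ c, ∑ q, f p q a c :=
        Finset.sum_congr rfl fun p _ => sum_rotate fun q a c => f p q a c
    _ = ∑ a, ∑ c, ∑ p, ∑ q, f p q a c := sum_rotate fun p a c => ∑ q, f p q a c

private lemma swap6 {α β : Type*} [Fintype α] [Fintype β]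
    (f : α → α → α → α → β → β → ℝ) :
    ∑ j, ∑ l, ∑ k, ∑ i, ∑ a, ∑ c, f j l k i a c
      = ∑ a, ∑ c, ∑ j, ∑ l, ∑ k, ∑ i, f j l k i a c := by
  calc ∑ j, ∑ l, ∑ k, ∑ i, ∑ a, ∑ c, f j l k i a c
      = ∑ j, ∑ l, ∑ a, ∑ c, ∑ k, ∑ i, f j l k i a c :=
        Finset.sum_congr rfl fun j _ => Finset.sum_congr rfl fun l _ =>
          swap4 fun k i a c => f j l k i a c
    _ = ∑ a, ∑ c, ∑ j, ∑ l, ∑ k, ∑ i, f j l k i a c :=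
        swap4 fun j l a c => ∑ k, ∑ i, f j l k i a c

lemma rtensor_eq (k l i j : Fin n) :
    Rtensor A b x k l i j = ∑ a, ∑ c, Pmat A b x a c *
      (Ascaled A b x a j * Ascaled A b x a k * Ascaled A b x c i * Ascaled A b x c l
        - Ascaled A b x a i * Ascaled A b x a k * Ascaled A b x c j * Ascaled A b x c l) := by
  have key : ∀ p q : Fin n,
      (gmat A b x)⁻¹ p q *
        (phi3 A b x j k p * phi3 A b x i l q - phi3 A b x i k p * phi3 A b x j l q)
      = ∑ a, ∑ c, (4 * (gmat A b x)⁻¹ p q *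
            (Ascaled A b x a j * Ascaled A b x a k * Ascaled A b x a p *
              (Ascaled A b x c i * Ascaled A b x c l * Ascaled A b x c q))
          - 4 * (gmat A b x)⁻¹ p q *
            (Ascaled A b x a i * Ascaled A b x a k * Ascaled A b x a p *
              (Ascaled A b x c j * Ascaled A b x c l * Ascaled A b x c q))) := by
    intro p q
    simp only [phi3]
    exact prod_expand _ _ _ _ _
  calc Rtensor A b x k l i j
      = ∑ p, ∑ q, (1/4 : ℝ) * ((gmat A b x)⁻¹ p q *
          (phi3 A b x j k p * phi3 A b x i l q - phi3 A b x i k p * phi3 A b x j l q)) := by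
        rw [Rtensor, Finset.mul_sum]
        exact Finset.sum_congr rfl fun p _ => Finset.mul_sum _ _ _
    _ = ∑ p, ∑ q, ∑ a, ∑ c, (gmat A b x)⁻¹ p q * Ascaled A b x a p * Ascaled A b x c q *
          (Ascaled A b x a j * Ascaled A b x a k * Ascaled A b x c i * Ascaled A b x c l
            - Ascaled A b x a i * Ascaled A b x a k * Ascaled A b x c j * Ascaled A b x c l) := by
        refine Finset.sum_congr rfl fun p _ => Finset.sum_congr rfl fun q _ => ?_
        rw [key p q, Finset.mul_sum]
        refine Finset.sum_congr rfl fun a _ => ?_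
        rw [Finset.mul_sum]
        exact Finset.sum_congr rfl fun c _ => by ring
    _ = ∑ a, ∑ c, ∑ p, ∑ q, (gmat A b x)⁻¹ p q * Ascaled A b x a p * Ascaled A b x c q *
          (Ascaled A b x a j * Ascaled A b x a k * Ascaled A b x c i * Ascaled A b x c l
            - Ascaled A b x a i * Ascaled A b x a k * Ascaled A b x c j * Ascaled A b x c l) :=
        swap4 _
    _ = ∑ a, ∑ c, Pmat A b x a c *
          (Ascaled A b x a j * Ascaled A b x a k * Ascaled A b x c i * Ascaled A b x c l
            - Ascaled A b x a i * Ascaled A b x a k * Ascaled A b x c j * Ascaled A b x c l) := by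
        refine Finset.sum_congr rfl fun a _ => Finset.sum_congr rfl fun c _ => ?_
        rw [pmat_eq, Finset.sum_mul]
        refine Finset.sum_congr rfl fun p _ => ?_
        rw [Finset.sum_mul]


lemma ric_flat (v : Fin n → ℝ) :
    RicLog A b x v = ∑ j, ∑ l, ∑ k, ∑ i, ∑ a, ∑ c,
      (gmat A b x)⁻¹ j l * (Pmat A b x a c *
        (Ascaled A b x a j * Ascaled A b x a k * Ascaled A b x c i * Ascaled A b x c l
          - Ascaled A b x a i * Ascaled A b x a k * Ascaled A b x c j * Ascaled A b x c l)
        * v i * v k) := by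
  simp only [RicLog]
  refine Finset.sum_congr rfl fun j _ => Finset.sum_congr rfl fun l _ => ?_
  rw [Finset.mul_sum]
  refine Finset.sum_congr rfl fun k _ => ?_
  rw [Finset.mul_sum]
  refine Finset.sum_congr rfl fun i _ => ?_
  rw [rtensor_eq, Finset.sum_mul, Finset.sum_mul, Finset.mul_sum]
  refine Finset.sum_congr rfl fun a _ => ?_
  rw [Finset.sum_mul, Finset.sum_mul, Finset.mul_sum]

lemma ric_sum (v : Fin n → ℝ) :
    RicLog A b x v = ∑ a, ∑ c,
      (Pmat A b x a c * Pmat A b x a c *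
          (∑ k, Ascaled A b x a k * v k) * (∑ i, Ascaled A b x c i * v i)
        - Pmat A b x a c * Pmat A b x c c *
          (∑ k, Ascaled A b x a k * v k) * (∑ i, Ascaled A b x a i * v i)) := by
  rw [ric_flat, swap6]
  refine Finset.sum_congr rfl fun a _ => Finset.sum_congr rfl fun c _ => ?_
  have e1 : Pmat A b x a c *
        (∑ j, ∑ l, (gmat A b x)⁻¹ j l * Ascaled A b x a j * Ascaled A b x c l) *
        (∑ k, Ascaled A b x a k * v k) * (∑ i, Ascaled A b x c i * v i)
      = ∑ j, ∑ l, ∑ k, ∑ i, Pmat A b x a c *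
          ((gmat A b x)⁻¹ j l * Ascaled A b x a j * Ascaled A b x c l) *
          (Ascaled A b x a k * v k) * (Ascaled A b x c i * v i) :=
    sum4_mul _ _ _ _
  have e2 : Pmat A b x a c *
        (∑ j, ∑ l, (gmat A b x)⁻¹ j l * Ascaled A b x c j * Ascaled A b x c l) *
        (∑ k, Ascaled A b x a k * v k) * (∑ i, Ascaled A b x a i * v i)
      = ∑ j, ∑ l, ∑ k, ∑ i, Pmat A b x a c *
          ((gmat A b x)⁻¹ j l * Ascaled A b x c j * Ascaled A b x c l) *
          (Ascaled A b x a k * v k) * (Ascaled A b x a i * v i) :=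
    sum4_mul _ _ _ _
  calc ∑ j, ∑ l, ∑ k, ∑ i, (gmat A b x)⁻¹ j l * (Pmat A b x a c *
        (Ascaled A b x a j * Ascaled A b x a k * Ascaled A b x c i * Ascaled A b x c l
          - Ascaled A b x a i * Ascaled A b x a k * Ascaled A b x c j * Ascaled A b x c l)
        * v i * v k)
      = ∑ j, ∑ l, ∑ k, ∑ i,
          (Pmat A b x a c *
            ((gmat A b x)⁻¹ j l * Ascaled A b x a j * Ascaled A b x c l) *
            (Ascaled A b x a k * v k) * (Ascaled A b x c i * v i)
          - Pmat A b x a c *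
            ((gmat A b x)⁻¹ j l * Ascaled A b x c j * Ascaled A b x c l) *
            (Ascaled A b x a k * v k) * (Ascaled A b x a i * v i)) := by
        exact Finset.sum_congr rfl fun j _ => Finset.sum_congr rfl fun l _ =>
          Finset.sum_congr rfl fun k _ => Finset.sum_congr rfl fun i _ => by ring
    _ = (∑ j, ∑ l, ∑ k, ∑ i, Pmat A b x a c *
            ((gmat A b x)⁻¹ j l * Ascaled A b x a j * Ascaled A b x c l) *
            (Ascaled A b x a k * v k) * (Ascaled A b x c i * v i))
        - ∑ j, ∑ l, ∑ k, ∑ i, Pmat A b x a c *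
            ((gmat A b x)⁻¹ j l * Ascaled A b x c j * Ascaled A b x c l) *
            (Ascaled A b x a k * v k) * (Ascaled A b x a i * v i) := by
        simp only [Finset.sum_sub_distrib]
    _ = Pmat A b x a c *
          (∑ j, ∑ l, (gmat A b x)⁻¹ j l * Ascaled A b x a j * Ascaled A b x c l) *
          (∑ k, Ascaled A b x a k * v k) * (∑ i, Ascaled A b x c i * v i)
        - Pmat A b x a c *
          (∑ j, ∑ l, (gmat A b x)⁻¹ j l * Ascaled A b x c j * Ascaled A b x c l) *
          (∑ k, Ascaled A b x a k * v k) * (∑ i, Ascaled A b x a i * v i) := by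
        rw [e1, e2]
    _ = Pmat A b x a c * Pmat A b x a c *
          (∑ k, Ascaled A b x a k * v k) * (∑ i, Ascaled A b x c i * v i)
        - Pmat A b x a c * Pmat A b x c c *
          (∑ k, Ascaled A b x a k * v k) * (∑ i, Ascaled A b x a i * v i) := by
        rw [← pmat_eq A b x a c, ← pmat_eq A b x c c]

end main

/-- Ricci curvature of the Hessian manifold of the logarithmic barrier:
`Ric(v) = s_vᵀ P⁽²⁾ s_v − σᵀ P s_v²`. -/
theorem ricci_log_barrier {m n : ℕ} (A : Matrix (Fin m) (Fin n) ℝ) (b : Fin m → ℝ)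
    (x : Fin n → ℝ) (hrank : A.rank = n) (hx : ∀ i, b i < A.mulVec x i)
    (v : Fin n → ℝ) :
    RicLog A b x v =
      dotProduct ((Ascaled A b x).mulVec v)
        ((Matrix.of fun i j => (Pmat A b x i j) ^ 2).mulVec ((Ascaled A b x).mulVec v))
      - dotProduct (fun i => Pmat A b x i i)
        ((Pmat A b x).mulVec (fun i => ((Ascaled A b x).mulVec v i) ^ 2)) := by
  have h1 : dotProduct ((Ascaled A b x).mulVec v)
        ((Matrix.of fun i j => (Pmat A b x i j) ^ 2).mulVec ((Ascaled A b x).mulVec v))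
      = ∑ a, ∑ c, Pmat A b x a c * Pmat A b x a c *
          (∑ k, Ascaled A b x a k * v k) * (∑ i, Ascaled A b x c i * v i) := by
    simp only [dotProduct, Matrix.mulVec, Matrix.of_apply]
    refine Finset.sum_congr rfl fun a _ => ?_
    rw [Finset.mul_sum]
    exact Finset.sum_congr rfl fun c _ => by ring
  have h2 : dotProduct (fun i => Pmat A b x i i)
        ((Pmat A b x).mulVec (fun i => ((Ascaled A b x).mulVec v i) ^ 2))
      = ∑ a, ∑ c, Pmat A b x a c * Pmat A b x c c *
          (∑ k, Ascaled A b x a k * v k) * (∑ i, Ascaled A b x a i * v i) := by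
    simp only [dotProduct, Matrix.mulVec]
    refine Eq.trans (Finset.sum_congr rfl fun c _ => Finset.mul_sum _ _ _) ?_
    rw [Finset.sum_comm]
    refine Finset.sum_congr rfl fun a _ => Finset.sum_congr rfl fun c _ => ?_
    rw [pmat_symm A b x c a]
    ring
  rw [ric_sum, h1, h2]
  simp only [Finset.sum_sub_distrib]
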